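/- If an additive functor E from an abelian category A to abelian groups is right exact (i.e., for every short exact sequence 0 → A' → A → A'' → 0 in A the induced sequence E(A') → E(A) → E(A'') → 0 is exact) and E = Ext^1(Q, -) arises as the first derived functor of Hom(Q, -) for a projective-dimension argument, then all higher Yoneda extension groups Ext^ν(Q, H) vanish for ν ≥ 2. Formally: in an abelian category, if Ext^1(Q, -) is right exact as a functor, then Ext^ν(Q, H) = 0 for all objects H and all ν ≥ 2. -/

import Mathlib

open CategoryTheory Limits

universe u v w

namespace ExtVanishAux

lemma effaceable_complex {C : Type u} [Category.{v} C] [Abelian C] (n : ℤ) {H : C} (Z : CochainComplex C ℤ)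
    (hZ : Z.ExactAt n)
    (g : Z ⟶ (HomologicalComplex.single C (ComplexShape.up ℤ) n).obj H) :
    ∃ (P : C) (u : H ⟶ P) (_ : Mono u),
      Nonempty (Homotopy (g ≫ (HomologicalComplex.single C (ComplexShape.up ℤ) n).map u) 0) := by
  set φ : Z.X n ⟶ H :=
    g.f n ≫ (HomologicalComplex.singleObjXSelf (ComplexShape.up ℤ) n H).hom with hφ
  set S := ShortComplex.mk (Z.d (n-1) n) (Z.d n (n+1)) (Z.d_comp_d _ _ _) with hSdef
  have hS : S.Exact := by
    have := (Z.exactAt_iff' (n-1) n (n+1) (by simp) (by simp)).1 hZ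
    exact this
  have hdφ : S.f ≫ φ = 0 := by
    have := g.comm (n-1) n
    dsimp [S, φ]
    rw [← Category.assoc]
    change (Z.d (n-1) n ≫ g.f n) ≫ _ = 0
    rw [← this]
    simp
  have hepi : Epi (kernel.lift S.g S.f S.zero) := S.exact_iff_epi_kernel_lift.1 hS
  have hk : kernel.ι S.g ≫ φ = 0 := by
    rw [← cancel_epi (kernel.lift S.g S.f S.zero), comp_zero, kernel.lift_ι_assoc]
    exact hdφ
  refine ⟨pushout φ S.g, pushout.inl φ S.g, ?_, ⟨?_⟩⟩
  · have := Abelian.mono_inl_of_factor_thru_epi_mono_factorization φ S.g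
      (cokernel.π (kernel.ι S.g)) (Abelian.factorThruCoimage S.g)
      (Abelian.coimage.fac S.g)
      (cokernel.desc (kernel.ι S.g) φ hk) (by simp)
      _ (pushoutIsPushout φ S.g)
    exact this
  · refine
      { hom := fun i j =>
          if hij : i = n + 1 ∧ j = n then
            eqToHom (by rw [hij.1]) ≫ pushout.inr φ S.g ≫
              (HomologicalComplex.singleObjXSelf (ComplexShape.up ℤ) n
                (pushout φ S.g)).inv ≫ eqToHom (by rw [hij.2])
          else 0
        zero := ?_
        comm := ?_ }
    · intro i j hij
      rw [dif_neg]
      rintro ⟨rfl, rfl⟩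
      exact hij (by simp)
    · intro i
      by_cases hi : i = n
      · subst hi
        have hrel : (ComplexShape.up ℤ).Rel i (i+1) := by simp
        have hrel' : (ComplexShape.up ℤ).Rel (i-1) i := by simp
        rw [dNext_eq _ hrel, prevD_eq _ hrel']
        rw [dif_pos ⟨rfl, rfl⟩, dif_neg (by omega)]
        simp only [eqToHom_refl, Category.comp_id, Category.id_comp, zero_comp,
          HomologicalComplex.single_obj_d, comp_zero, add_zero]
        dsimp
        rw [HomologicalComplex.single_map_f_self]
        have hpc := pushout.condition (f := φ) (g := S.g)
        dsimp [φ] at hpc ⊢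
        rw [add_zero]
        simp only [← Category.assoc] at hpc ⊢
        rw [hpc]
      · exact (HomologicalComplex.isZero_single_obj_X (ComplexShape.up ℤ) n _ i hi).eq_of_tgt _ _

open Abelian in
lemma ext_effaceable {C : Type u} [Category.{v} C] [Abelian C] [HasExt.{w} C]
    {Q H : C} (n : ℕ) (hn : 1 ≤ n) (e : Abelian.Ext Q H n) :
    ∃ (P : C) (u : H ⟶ P) (_ : Mono u), e.comp (Abelian.Ext.mk₀ u) (add_zero n) = 0 := by
  letI := HasDerivedCategory.standard C
  have hW : (HomotopyCategory.quasiIso C (ComplexShape.up ℤ)).HasRightCalculusOfFractions := by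
    rw [HomotopyCategory.quasiIso_eq_subcategoryAcyclic_W]
    infer_instance
  let Φ := (DerivedCategory.singleFunctors C).shiftIso (n : ℤ) (-(n : ℤ)) 0 (by omega)
  let ε : DerivedCategory.Qh.obj ((HomotopyCategory.quotient C (ComplexShape.up ℤ)).obj
            ((HomologicalComplex.single C (ComplexShape.up ℤ) 0).obj Q)) ⟶
          DerivedCategory.Qh.obj ((HomotopyCategory.quotient C (ComplexShape.up ℤ)).obj
            ((HomologicalComplex.single C (ComplexShape.up ℤ) (-(n : ℤ))).obj H)) :=
    e.hom ≫ Φ.hom.app H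
  obtain ⟨ρ, hρ⟩ := Localization.exists_rightFraction DerivedCategory.Qh
    (HomotopyCategory.quasiIso C (ComplexShape.up ℤ)) ε
  obtain ⟨s', hs'⟩ := (HomotopyCategory.quotient C (ComplexShape.up ℤ)).map_surjective ρ.s
  obtain ⟨g', hg'⟩ := (HomotopyCategory.quotient C (ComplexShape.up ℤ)).map_surjective ρ.f
  have hq : QuasiIso s' := by
    have h := ρ.hs
    have h' : HomotopyCategory.quasiIso C _ ((HomotopyCategory.quotient C _).map s') := by
      rw [hs']; exact h
    rw [HomotopyCategory.quotient_map_mem_quasiIso_iff] at h'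
    replace h := h'
    exact (HomologicalComplex.mem_quasiIso_iff _).1 h
  have hZ : (ρ.X').as.ExactAt (-(n : ℤ)) := by
    have hA : ((HomologicalComplex.single C (ComplexShape.up ℤ) 0).obj Q).ExactAt (-(n : ℤ)) :=
      HomologicalComplex.exactAt_single_obj _ _ _ _ (by omega)
    exact (quasiIsoAt_iff_exactAt' s' _ hA).1 inferInstance
  obtain ⟨P, u, hu, ⟨ht⟩⟩ := effaceable_complex (-(n : ℤ)) (ρ.X').as hZ g'
  refine ⟨P, u, hu, ?_⟩
  have hkey : ε ≫ (DerivedCategory.singleFunctor C (-(n : ℤ))).map u = 0 := by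
    have hiso : IsIso (DerivedCategory.Qh.map ρ.s) :=
      Localization.inverts _ (HomotopyCategory.quasiIso C (ComplexShape.up ℤ)) _ ρ.hs
    have hid : (DerivedCategory.singleFunctor C (-(n : ℤ))).map u =
        DerivedCategory.Qh.map ((HomotopyCategory.quotient C (ComplexShape.up ℤ)).map
          ((HomologicalComplex.single C (ComplexShape.up ℤ) (-(n : ℤ))).map u)) := rfl
    change ε ≫ DerivedCategory.Qh.map ((HomotopyCategory.quotient C (ComplexShape.up ℤ)).map
          ((HomologicalComplex.single C (ComplexShape.up ℤ) (-(n : ℤ))).map u)) = 0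
    rw [hρ, ← cancel_epi (DerivedCategory.Qh.map ρ.s), comp_zero, ← Category.assoc,
      MorphismProperty.RightFraction.map_s_comp_map]
    rw [← hg']
    have h0 : (HomotopyCategory.quotient C (ComplexShape.up ℤ)).map
        (g' ≫ (HomologicalComplex.single C (ComplexShape.up ℤ) (-(n : ℤ))).map u) = 0 := by
      rw [HomotopyCategory.eq_of_homotopy _ _ ht, Functor.map_zero]
    exact (by rw [← Functor.map_comp, ← Functor.map_comp, h0, Functor.map_zero] :
      DerivedCategory.Qh.map ((HomotopyCategory.quotient C (ComplexShape.up ℤ)).map g') ≫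
        DerivedCategory.Qh.map ((HomotopyCategory.quotient C (ComplexShape.up ℤ)).map
          ((HomologicalComplex.single C (ComplexShape.up ℤ) (-(n : ℤ))).map u)) = 0)
  apply Abelian.Ext.ext
  rw [Abelian.Ext.zero_hom, ← Abelian.Ext.hom_comp_singleFunctor_map_shift]
  rw [← cancel_mono (Φ.hom.app P), zero_comp, Category.assoc]
  have hnat : (shiftFunctor (DerivedCategory C) (n : ℤ)).map
        ((DerivedCategory.singleFunctor C 0).map u) ≫ Φ.hom.app P =
      Φ.hom.app H ≫ (DerivedCategory.singleFunctor C (-(n : ℤ))).map u :=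
    Φ.hom.naturality u
  rw [hnat]
  rw [← Category.assoc]
  exact hkey

end ExtVanishAux

/-- In an abelian category (with Ext groups), if the functor
`Ext¹(Q, -)` is right exact — i.e. for every epimorphism `H ⟶ H''` the induced map
`Ext¹(Q, H) → Ext¹(Q, H'')` is surjective — then all higher Yoneda extension groups
`Ext^ν(Q, H)` vanish for `ν ≥ 2`. -/
theorem ext_vanishing_of_ext_one_right_exact
    {C : Type u} [Category.{v} C] [Abelian C] [HasExt.{w} C] (Q : C)
    (hre : ∀ (H H'' : C) (f : H ⟶ H''), Epi f →
      Function.Surjective (fun e : Abelian.Ext Q H 1 =>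
        e.comp (Abelian.Ext.mk₀ f) (add_zero 1)))
    (H : C) (ν : ℕ) (hν : 2 ≤ ν) :
    Subsingleton (Abelian.Ext Q H ν) := by
  have main : ∀ (ν : ℕ), 2 ≤ ν → ∀ (H : C) (e : Abelian.Ext Q H ν), e = 0 := by
    intro ν
    induction ν using Nat.strong_induction_on with
    | _ ν ih =>
      intro hν H e
      obtain ⟨P, u, hu, he⟩ := ExtVanishAux.ext_effaceable ν (by omega) e
      let S := CategoryTheory.ShortComplex.mk u (Limits.cokernel.π u) (Limits.cokernel.condition u)
      have hmono : Mono S.f := hu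
      have hepi : Epi S.g := by
        dsimp only [S]
        infer_instance
      have hSe : S.ShortExact :=
        { exact := S.exact_of_g_is_cokernel (Limits.cokernelIsCokernel u) }
      obtain ⟨x₃, hx₃⟩ := Abelian.Ext.covariant_sequence_exact₁ Q hSe e he
        (show (ν - 1) + 1 = ν by omega)
      rcases eq_or_lt_of_le hν with h2 | h3
      · subst h2
        obtain ⟨y, hy⟩ := hre S.X₂ S.X₃ S.g hepi x₃
        dsimp only at hy
        rw [← hx₃, ← hy, Abelian.Ext.comp_assoc_of_second_deg_zero,
          hSe.comp_extClass, Abelian.Ext.comp_zero]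
      · have hx0 : x₃ = 0 := ih (ν - 1) (by omega) (by omega) _ x₃
        rw [← hx₃, hx0, Abelian.Ext.zero_comp]
  exact subsingleton_of_forall_eq 0 (fun e => main ν hν H e)
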